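/- Consider the 2-Choices dynamics. For any opinion i ∈ [k] and any round t ≥ 1, if α_{t−1}(i) ≤ γ_{t−1}, then conditioned on the configuration at round t−1, the difference α_t(i) − α_{t−1}(i) satisfies the one-sided (1/n, 2·α_{t−1}(i)²/n)-Bernstein condition. -/

import Mathlib

open MeasureTheory ProbabilityTheory
open scoped ENNReal

noncomputable section

/-- A configuration: each of the `n` vertices holds one of `k` opinions. -/
abbrev Config (n k : ℕ) := Fin n → Fin k

/-- `alphaFrac σ i` is the fraction of vertices holding opinion `i`. -/
def alphaFrac {n k : ℕ} (σ : Config n k) (i : Fin k) : ℝ :=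
  (Finset.univ.filter (fun v => σ v = i)).card / (n : ℝ)

/-- `gammaNorm σ = ∑ i, α(i)²`, the squared ℓ²-norm of the opinion fractions. -/
def gammaNorm {n k : ℕ} (σ : Config n k) : ℝ :=
  ∑ i : Fin k, alphaFrac σ i ^ 2

/-- Random seed for one round of 3-Majority: each vertex picks three vertices. -/
abbrev Maj3Seed (n : ℕ) := Fin n → Fin n × Fin n × Fin n

/-- Random seed for one round of 2-Choices: each vertex picks two vertices. -/
abbrev Ch2Seed (n : ℕ) := Fin n → Fin n × Fin n

/-- One synchronous round of 3-Majority given the random choices `w`. -/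
def maj3Update {n k : ℕ} (σ : Config n k) (w : Maj3Seed n) : Config n k :=
  fun v => if σ (w v).1 = σ (w v).2.1 then σ (w v).1 else σ (w v).2.2

/-- One synchronous round of 2-Choices given the random choices `w`. -/
def ch2Update {n k : ℕ} (σ : Config n k) (w : Ch2Seed n) : Config n k :=
  fun v => if σ (w v).1 = σ (w v).2 then σ (w v).1 else σ v

/-- Trajectory of 3-Majority from `σ0` driven by the seed sequence `ω`. -/
def maj3Traj {n k : ℕ} (σ0 : Config n k) (ω : ℕ → Maj3Seed n) : ℕ → Config n k
  | 0 => σ0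
  | t + 1 => maj3Update (maj3Traj σ0 ω t) (ω t)

/-- Trajectory of 2-Choices from `σ0` driven by the seed sequence `ω`. -/
def ch2Traj {n k : ℕ} (σ0 : Config n k) (ω : ℕ → Ch2Seed n) : ℕ → Config n k
  | 0 => σ0
  | t + 1 => ch2Update (ch2Traj σ0 ω t) (ω t)

/-- The uniform probability measure on a finite type. -/
def uniformOn (A : Type*) [MeasurableSpace A] [Fintype A] : Measure A :=
  (Fintype.card A : ℝ≥0∞)⁻¹ • Measure.count

/-- `U 0, U 1, …` is an i.i.d. sequence of uniformly distributed random seeds. -/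
def IsIIDUniformSeeds {Ω A : Type*} [MeasurableSpace Ω] [MeasurableSpace A] [Fintype A]
    (μ : Measure Ω) (U : ℕ → Ω → A) : Prop :=
  iIndepFun U μ ∧ ∀ t : ℕ, Measure.map (U t) μ = uniformOn A

/-- Distribution of the next configuration of 2-Choices, given the current one. -/
def ch2Step {n k : ℕ} (σ : Config n k) : Measure (Config n k) :=
  Measure.map (ch2Update σ) (uniformOn (Ch2Seed n))

/-- `X` satisfies the one-sided `(D, s)`-Bernstein condition. -/
def OneSidedBernsteinCond {Ω : Type*} [MeasurableSpace Ω] (μ : Measure Ω) (X : Ω → ℝ)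
    (D s : ℝ) : Prop :=
  ∀ l : ℝ, 0 ≤ l → l * D < 3 →
    (∫⁻ ω, ENNReal.ofReal (Real.exp (l * X ω)) ∂μ) ≤
      ENNReal.ofReal (Real.exp (l ^ 2 * s / 2 / (1 - l * D / 3)))

lemma expNegLe (t : ℝ) (ht : 0 ≤ t) : Real.exp (-t) ≤ 1 - t + t^2/2 := by
  have key : Monotone (fun x : ℝ => 1 - x + x^2/2 - Real.exp (-x)) := by
    have hd : ∀ x : ℝ, HasDerivAt (fun x : ℝ => 1 - x + x^2/2 - Real.exp (-x))
        (-1 + x + Real.exp (-x)) x := by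
      intro x
      have h1 : HasDerivAt (fun x : ℝ => Real.exp (-x)) (-Real.exp (-x)) x := by
        simpa [Function.comp_def] using (Real.hasDerivAt_exp (-x)).comp x (hasDerivAt_neg x)
      have h2 : HasDerivAt (fun x : ℝ => 1 - x + x^2/2) (-1 + x) x := by
        have : HasDerivAt (fun x : ℝ => x^2) (2*x) x := by
          simpa using hasDerivAt_pow 2 x
        have := ((hasDerivAt_const x (1:ℝ)).sub (hasDerivAt_id x)).add (this.div_const 2)
        exact this.congr_deriv (by ring)
      have := h2.sub h1
      exact this.congr_deriv (by ring)
    apply monotone_of_deriv_nonneg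
    · exact fun x => (hd x).differentiableAt
    · intro x
      rw [(hd x).deriv]
      have := Real.add_one_le_exp (-x)
      linarith
  have h0 : (fun x : ℝ => 1 - x + x^2/2 - Real.exp (-x)) 0 = 0 := by simp
  have := key ht
  simp only [h0] at this
  linarith [this]

lemma expPosLe (t : ℝ) (ht : 0 ≤ t) :
    (1 - t/3) * Real.exp t ≤ (1 - t/3)*(1+t) + t^2/2 := by
  -- p(t) = (1-t/3)(1+t) + t^2/2 - (1-t/3) e^t ;  p' = 2/3 + t/3 - e^t (2-t)/3 ; p'' = (1 - e^t(1-t))/3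
  set p1 : ℝ → ℝ := fun x => 2/3 + x/3 - Real.exp x * (2 - x)/3 with hp1def
  have hd1 : ∀ x : ℝ, HasDerivAt p1 ((1 - Real.exp x * (1 - x))/3) x := by
    intro x
    have hm : HasDerivAt (fun x : ℝ => Real.exp x * (2 - x))
        (Real.exp x * (2 - x) + Real.exp x * (-1)) x := by
      have := (Real.hasDerivAt_exp x).mul ((hasDerivAt_const x (2:ℝ)).sub (hasDerivAt_id x))
      exact this.congr_deriv (by simp)
    have := ((hasDerivAt_const x (2/3 : ℝ)).add ((hasDerivAt_id x).div_const 3)).sub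
      (hm.div_const 3)
    exact this.congr_deriv (by ring)
  have hp1mono : Monotone p1 := by
    apply monotone_of_deriv_nonneg (fun x => (hd1 x).differentiableAt)
    intro x
    rw [(hd1 x).deriv]
    have h := Real.add_one_le_exp (-x)
    have hx : Real.exp x * (1 - x) ≤ 1 := by
      have hpos := Real.exp_pos x
      have : Real.exp x * (1 - x) ≤ Real.exp x * Real.exp (-x) := by
        apply mul_le_mul_of_nonneg_left (by linarith) hpos.le
      rwa [← Real.exp_add, add_neg_cancel, Real.exp_zero] at this
    linarith
  have hp1nonneg : ∀ x : ℝ, 0 ≤ x → 0 ≤ p1 x := by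
    intro x hx
    have := hp1mono hx
    have h0 : p1 0 = 0 := by simp [hp1def]
    linarith [h0 ▸ this]
  -- now p
  set p : ℝ → ℝ := fun x => (1 - x/3)*(1+x) + x^2/2 - (1 - x/3) * Real.exp x with hpdef
  have hd : ∀ x : ℝ, HasDerivAt p (p1 x) x := by
    intro x
    have ha : HasDerivAt (fun x : ℝ => (1 - x/3)*(1+x))
        ((-(1/3))*(1+x) + (1 - x/3)*1) x := by
      have := ((hasDerivAt_const x (1:ℝ)).sub ((hasDerivAt_id x).div_const 3)).mul
        ((hasDerivAt_const x (1:ℝ)).add (hasDerivAt_id x))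
      simp only [id_eq] at this
      exact this.congr_deriv (by simp only [Pi.add_apply, Pi.sub_apply, id_eq]; ring)
    have hb : HasDerivAt (fun x : ℝ => x^2/2) x x := by
      have : HasDerivAt (fun x : ℝ => x^2) (2*x) x := by simpa using hasDerivAt_pow 2 x
      exact (this.div_const 2).congr_deriv (by ring)
    have hc : HasDerivAt (fun x : ℝ => (1 - x/3) * Real.exp x)
        ((-(1/3)) * Real.exp x + (1 - x/3) * Real.exp x) x := by
      have := ((hasDerivAt_const x (1:ℝ)).sub ((hasDerivAt_id x).div_const 3)).mul
        (Real.hasDerivAt_exp x)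
      simp only [id_eq] at this
      exact this.congr_deriv (by simp only [Pi.add_apply, Pi.sub_apply, id_eq]; ring)
    have := (ha.add hb).sub hc
    exact this.congr_deriv (by simp only [hp1def]; ring)
  have hmono : MonotoneOn p (Set.Ici (0:ℝ)) := by
    apply monotoneOn_of_deriv_nonneg (convex_Ici 0)
    · exact Continuous.continuousOn (by
        have : ∀ x, DifferentiableAt ℝ p x := fun x => (hd x).differentiableAt
        exact (Differentiable.continuous this))
    · intro x _
      exact (hd x).differentiableAt.differentiableWithinAt
    · intro x hx
      rw [(hd x).deriv]
      exact hp1nonneg x (le_of_lt (by simpa using hx))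
  have h0 : p 0 = 0 := by simp [hpdef]
  have := hmono (Set.self_mem_Ici) (Set.mem_Ici.mpr ht) ht
  rw [h0] at this
  simp only [hpdef] at this
  linarith

lemma coshBound (t : ℝ) (ht : 0 ≤ t) :
    (1 - t/3) * (Real.exp t + Real.exp (-t) - 2) ≤ t^2 := by
  have h1 := expPosLe t ht
  have h2 := expNegLe t ht
  have h3 : 0 ≤ 1 - t/3 ∨ 1 - t/3 ≤ 0 := le_total _ _
  rcases h3 with h3 | h3
  · have h4 : (1 - t/3) * Real.exp (-t) ≤ (1 - t/3) * (1 - t + t^2/2) :=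
      mul_le_mul_of_nonneg_left h2 h3
    nlinarith [sq_nonneg t]
  · have hc : 0 ≤ Real.exp t + Real.exp (-t) - 2 := by
      nlinarith [Real.add_one_le_exp t, Real.add_one_le_exp (-t)]
    nlinarith [sq_nonneg t]

section
variable {n k : ℕ} (σ : Config n k) (i : Fin k)

lemma countC :
    (Finset.univ.filter fun p : Fin n × Fin n => σ p.1 = σ p.2 ∧ σ p.1 = i).card
      = ((Finset.univ.filter fun v => σ v = i).card)^2 := by
  have he : (Finset.univ.filter fun p : Fin n × Fin n => σ p.1 = σ p.2 ∧ σ p.1 = i)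
      = (Finset.univ.filter fun v : Fin n => σ v = i) ×ˢ
        (Finset.univ.filter fun v : Fin n => σ v = i) := by
    ext p
    simp only [Finset.mem_filter, Finset.mem_product, Finset.mem_univ, true_and]
    constructor
    · rintro ⟨h1, h2⟩; exact ⟨h2, h1 ▸ h2⟩
    · rintro ⟨h1, h2⟩; exact ⟨h1.trans h2.symm, h1⟩
  rw [he, Finset.card_product]; ring

lemma countQ :
    (Finset.univ.filter fun p : Fin n × Fin n => σ p.1 = σ p.2 ∧ ¬ σ p.1 = i).card
      + ((Finset.univ.filter fun v => σ v = i).card)^2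
    = ∑ j : Fin k, ((Finset.univ.filter fun v => σ v = j).card)^2 := by
  have hsum : (Finset.univ.filter fun p : Fin n × Fin n => σ p.1 = σ p.2)
      = Finset.univ.biUnion (fun j : Fin k =>
          (Finset.univ.filter fun v => σ v = j) ×ˢ (Finset.univ.filter fun v => σ v = j)) := by
    ext p
    simp only [Finset.mem_filter, Finset.mem_biUnion, Finset.mem_product, Finset.mem_univ,
      true_and]
    constructor
    · intro h; exact ⟨σ p.1, rfl, h.symm⟩
    · rintro ⟨j, h1, h2⟩; rw [h1, h2]
  have hdisj : ∀ j ∈ Finset.univ, ∀ j' ∈ Finset.univ, j ≠ j' →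
      Disjoint ((Finset.univ.filter fun v : Fin n => σ v = j) ×ˢ
          (Finset.univ.filter fun v => σ v = j))
        ((Finset.univ.filter fun v : Fin n => σ v = j') ×ˢ
          (Finset.univ.filter fun v => σ v = j')) := by
    intro j _ j' _ hjj'
    rw [Finset.disjoint_left]
    rintro p hp hp'
    simp only [Finset.mem_product, Finset.mem_filter, Finset.mem_univ, true_and] at hp hp'
    exact hjj' (hp.1.symm.trans hp'.1)
  have hcard : (Finset.univ.filter fun p : Fin n × Fin n => σ p.1 = σ p.2).card
      = ∑ j : Fin k, ((Finset.univ.filter fun v => σ v = j).card)^2 := by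
    rw [hsum, Finset.card_biUnion hdisj]
    congr 1; ext j; rw [Finset.card_product]; ring
  rw [← hcard]
  have hsplit := Finset.card_filter_add_card_filter_not
    (s := Finset.univ.filter fun p : Fin n × Fin n => σ p.1 = σ p.2)
    (p := fun p => σ p.1 = i)
  rw [Finset.filter_filter, Finset.filter_filter] at hsplit
  rw [countC σ i] at hsplit
  omega

end

set_option maxHeartbeats 4000000 in
lemma mainRealIneq (n k : ℕ) (hn : 0 < n) (σ : Config n k) (i : Fin k)
    (hag : alphaFrac σ i ≤ gammaNorm σ) (l : ℝ) (hl0 : 0 ≤ l) (hl3 : l * (1/(n:ℝ)) < 3)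
    (expNegLe : ∀ t : ℝ, 0 ≤ t → Real.exp (-t) ≤ 1 - t + t^2/2)
    (coshBound : ∀ t : ℝ, 0 ≤ t → (1 - t/3) * (Real.exp t + Real.exp (-t) - 2) ≤ t^2) :
    (∑ w : Ch2Seed n, Real.exp (l * (alphaFrac (ch2Update σ w) i - alphaFrac σ i)))
      ≤ (Fintype.card (Ch2Seed n) : ℝ) *
        Real.exp (l^2 * (2 * alphaFrac σ i^2 / (n:ℝ)) / 2 / (1 - l * (1/(n:ℝ)) / 3)) := by
  have hnR : (0:ℝ) < n := by exact_mod_cast hn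
  set t : ℝ := l / n with htdef
  have ht0 : 0 ≤ t := div_nonneg hl0 hnR.le
  have ht3 : t < 3 := by
    have : l * (1/(n:ℝ)) = t := by rw [htdef]; ring
    linarith [this ▸ hl3]
  set a : ℝ := alphaFrac σ i with hadef
  set c : ℕ := (Finset.univ.filter fun v : Fin n => σ v = i).card with hcdef
  set Q : ℕ := (Finset.univ.filter fun p : Fin n × Fin n =>
      σ p.1 = σ p.2 ∧ ¬ σ p.1 = i).card with hQdef
  have hcn : c ≤ n := le_trans (Finset.card_filter_le _ _) (by simp)
  have hQnn : Q ≤ n*n := by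
    refine le_trans (Finset.card_filter_le _ _) ?_
    simp [Finset.card_univ]
  have hac : a = (c:ℝ)/n := rfl
  have ha0 : 0 ≤ a := by rw [hac]; positivity
  have ha1 : a ≤ 1 := by
    rw [hac, div_le_one hnR]; exact_mod_cast hcn
  -- γ = (Q + c²)/(n*n)
  have hγ : gammaNorm σ = ((Q:ℝ) + (c:ℝ)^2) / ((n:ℝ)*n) := by
    have hcount := countQ σ i
    rw [gammaNorm]
    have : ∀ j : Fin k, alphaFrac σ j ^ 2
        = ((((Finset.univ.filter fun v => σ v = j).card : ℝ))^2) / ((n:ℝ)*n) := by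
      intro j; rw [alphaFrac, div_pow]; congr 1; ring
    rw [Finset.sum_congr rfl (fun j _ => this j), ← Finset.sum_div]
    congr 1
    exact_mod_cast hcount.symm
  have hQa : a - a^2 ≤ (Q:ℝ)/((n:ℝ)*n) := by
    have ha2 : a^2 = (c:ℝ)^2/((n:ℝ)*n) := by rw [hac, div_pow]; congr 1; ring
    rw [hγ] at hag
    have : ((Q:ℝ) + (c:ℝ)^2)/((n:ℝ)*n) = (Q:ℝ)/((n:ℝ)*n) + (c:ℝ)^2/((n:ℝ)*n) := by ring
    rw [this] at hag
    linarith [hag, ha2 ▸ le_refl (a^2)]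
  -- per-summand rewrite
  have hsummand : ∀ w : Ch2Seed n,
      Real.exp (l * (alphaFrac (ch2Update σ w) i - alphaFrac σ i))
      = ∏ v : Fin n, Real.exp (t *
          ((if (if σ (w v).1 = σ (w v).2 then σ (w v).1 else σ v) = i then (1:ℝ) else 0)
            - (if σ v = i then 1 else 0))) := by
    intro w
    rw [← Real.exp_sum]
    congr 1
    have hA : ∀ τ : Config n k, alphaFrac τ i
        = (∑ v : Fin n, if τ v = i then (1:ℝ) else 0) / n := by
      intro τ
      rw [alphaFrac, Finset.card_filter]
      push_cast
      rfl
    rw [hA, hA]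
    have hupd : ∀ v, ch2Update σ w v = if σ (w v).1 = σ (w v).2 then σ (w v).1 else σ v :=
      fun v => rfl
    simp only [hupd]
    rw [div_sub_div_same, ← Finset.sum_sub_distrib, ← Finset.mul_sum, htdef]
    ring
  -- factorize the sum over seeds
  have hfact : (∑ w : Ch2Seed n, Real.exp (l * (alphaFrac (ch2Update σ w) i - alphaFrac σ i)))
      = ∏ v : Fin n, ∑ p : Fin n × Fin n, Real.exp (t *
          ((if (if σ p.1 = σ p.2 then σ p.1 else σ v) = i then (1:ℝ) else 0)
            - (if σ v = i then 1 else 0))) := by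
    rw [Finset.sum_congr rfl (fun w _ => hsummand w)]
    rw [← Fintype.piFinset_univ]
    exact Finset.sum_prod_piFinset (Finset.univ : Finset (Fin n × Fin n))
      (fun v p => Real.exp (t *
        ((if (if σ p.1 = σ p.2 then σ p.1 else σ v) = i then (1:ℝ) else 0)
          - (if σ v = i then 1 else 0))))
  -- per-vertex sums
  set E1 : ℝ := ((n:ℝ)*n) + (Q:ℝ) * (Real.exp (-t) - 1) with hE1def
  set E2 : ℝ := ((n:ℝ)*n) + ((c:ℝ)^2) * (Real.exp t - 1) with hE2def
  have hcardprod : (Finset.univ : Finset (Fin n × Fin n)).card = n*n := by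
    simp [Finset.card_univ]
  have hvpos : ∀ v : Fin n, σ v = i →
      (∑ p : Fin n × Fin n, Real.exp (t *
        ((if (if σ p.1 = σ p.2 then σ p.1 else σ v) = i then (1:ℝ) else 0)
          - (if σ v = i then 1 else 0)))) = E1 := by
    intro v hv
    have hg : ∀ p : Fin n × Fin n, Real.exp (t *
        ((if (if σ p.1 = σ p.2 then σ p.1 else σ v) = i then (1:ℝ) else 0)
          - (if σ v = i then 1 else 0)))
        = if (σ p.1 = σ p.2 ∧ ¬ σ p.1 = i) then Real.exp (-t) else 1 := by
      intro p
      by_cases h1 : σ p.1 = σ p.2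
      · rw [if_pos h1]
        by_cases h2 : σ p.1 = i
        · rw [if_pos h2, if_neg (fun hc : σ p.1 = σ p.2 ∧ ¬ σ p.1 = i => hc.2 h2), if_pos hv]
          norm_num
        · rw [if_neg h2, if_pos (show σ p.1 = σ p.2 ∧ ¬ σ p.1 = i from ⟨h1, h2⟩), if_pos hv]
          congr 1; ring
      · rw [if_neg h1, if_pos hv, if_neg (fun hc : σ p.1 = σ p.2 ∧ ¬ σ p.1 = i => h1 hc.1)]
        norm_num
    rw [Finset.sum_congr rfl (fun p _ => hg p), Finset.sum_ite, Finset.sum_const,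
      Finset.sum_const]
    have hsplit := Finset.card_filter_add_card_filter_not
      (s := (Finset.univ : Finset (Fin n × Fin n)))
      (p := fun p => σ p.1 = σ p.2 ∧ ¬ σ p.1 = i)
    rw [hcardprod, ← hQdef] at hsplit
    have hnegcard : ((Finset.univ.filter fun p : Fin n × Fin n =>
        ¬(σ p.1 = σ p.2 ∧ ¬ σ p.1 = i)).card : ℝ) = (n:ℝ)*n - Q := by
      have : (Finset.univ.filter fun p : Fin n × Fin n =>
          ¬(σ p.1 = σ p.2 ∧ ¬ σ p.1 = i)).card = n*n - Q := by
        rw [← hsplit]; omega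
      rw [this]
      have hle : Q ≤ n*n := hQnn
      push_cast [Nat.cast_sub hle]
      ring
    rw [nsmul_eq_mul, nsmul_eq_mul, hnegcard, ← hQdef, hE1def]
    ring
  have hvneg : ∀ v : Fin n, ¬ σ v = i →
      (∑ p : Fin n × Fin n, Real.exp (t *
        ((if (if σ p.1 = σ p.2 then σ p.1 else σ v) = i then (1:ℝ) else 0)
          - (if σ v = i then 1 else 0)))) = E2 := by
    intro v hv
    have hg : ∀ p : Fin n × Fin n, Real.exp (t *
        ((if (if σ p.1 = σ p.2 then σ p.1 else σ v) = i then (1:ℝ) else 0)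
          - (if σ v = i then 1 else 0)))
        = if (σ p.1 = σ p.2 ∧ σ p.1 = i) then Real.exp t else 1 := by
      intro p
      by_cases h1 : σ p.1 = σ p.2
      · rw [if_pos h1]
        by_cases h2 : σ p.1 = i
        · rw [if_pos h2, if_pos (show σ p.1 = σ p.2 ∧ σ p.1 = i from ⟨h1, h2⟩), if_neg hv]
          congr 1; ring
        · rw [if_neg h2, if_neg (fun hc : σ p.1 = σ p.2 ∧ σ p.1 = i => h2 hc.2), if_neg hv]
          norm_num
      · rw [if_neg h1, if_neg hv, if_neg (fun hc : σ p.1 = σ p.2 ∧ σ p.1 = i => h1 hc.1)]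
        norm_num
    rw [Finset.sum_congr rfl (fun p _ => hg p), Finset.sum_ite, Finset.sum_const,
      Finset.sum_const]
    have hCc := countC σ i
    have hsplit := Finset.card_filter_add_card_filter_not
      (s := (Finset.univ : Finset (Fin n × Fin n)))
      (p := fun p => σ p.1 = σ p.2 ∧ σ p.1 = i)
    rw [hcardprod, hCc] at hsplit
    have hc2 : c^2 ≤ n*n := by nlinarith [hcn]
    have hnegcard : ((Finset.univ.filter fun p : Fin n × Fin n =>
        ¬(σ p.1 = σ p.2 ∧ σ p.1 = i)).card : ℝ) = (n:ℝ)*n - (c:ℝ)^2 := by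
      have hh : (Finset.univ.filter fun p : Fin n × Fin n =>
          ¬(σ p.1 = σ p.2 ∧ σ p.1 = i)).card = n*n - c^2 := by
        rw [← hsplit, ← hcdef]; omega
      rw [hh]
      push_cast [Nat.cast_sub hc2]
      ring
    rw [nsmul_eq_mul, nsmul_eq_mul, hCc, hnegcard, hE2def]
    push_cast
    ring
  set m : ℕ := (Finset.univ.filter fun v : Fin n => ¬ σ v = i).card with hmdef
  have hcm : c + m = n := by
    have h9 := Finset.card_filter_add_card_filter_not
      (s := (Finset.univ : Finset (Fin n))) (p := fun v => σ v = i)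
    rw [Finset.card_univ, Fintype.card_fin] at h9
    exact h9
  have hprod : (∏ v : Fin n, ∑ p : Fin n × Fin n, Real.exp (t *
      ((if (if σ p.1 = σ p.2 then σ p.1 else σ v) = i then (1:ℝ) else 0)
        - (if σ v = i then 1 else 0)))) = E1 ^ c * E2 ^ m := by
    have hstep : ∀ v : Fin n, (∑ p : Fin n × Fin n, Real.exp (t *
        ((if (if σ p.1 = σ p.2 then σ p.1 else σ v) = i then (1:ℝ) else 0)
          - (if σ v = i then 1 else 0)))) = if σ v = i then E1 else E2 := by
      intro v
      by_cases hv : σ v = i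
      · rw [hvpos v hv, if_pos hv]
      · rw [hvneg v hv, if_neg hv]
    rw [Finset.prod_congr rfl (fun v _ => hstep v), Finset.prod_ite, Finset.prod_const,
      Finset.prod_const]
  clear_value t a c Q E1 E2 m
  -- inequalities
  set x1 : ℝ := (a - a^2) * (Real.exp (-t) - 1) with hx1def
  set x2 : ℝ := a^2 * (Real.exp t - 1) with hx2def
  clear_value x1 x2
  have hexpneg1 : Real.exp (-t) - 1 ≤ 0 := by
    have h := Real.exp_le_exp.mpr (neg_nonpos.mpr ht0)
    rw [Real.exp_zero] at h
    linarith
  have hnn : (0:ℝ) < (n:ℝ)*n := by positivity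
  have hQR : (Q:ℝ) ≤ (n:ℝ)*n := by exact_mod_cast hQnn
  have hE1nonneg : 0 ≤ E1 := by
    have h1 : (-1:ℝ) ≤ Real.exp (-t) - 1 := by linarith [Real.exp_pos (-t)]
    have h2 := mul_le_mul_of_nonneg_left h1 (Nat.cast_nonneg Q : (0:ℝ) ≤ (Q:ℝ))
    rw [hE1def]; nlinarith [hQR]
  have hE2nonneg : 0 ≤ E2 := by
    have h1 : (0:ℝ) ≤ Real.exp t - 1 := by linarith [Real.add_one_le_exp t, ht0]
    have h2 : (0:ℝ) ≤ (c:ℝ)^2 * (Real.exp t - 1) := mul_nonneg (by positivity) h1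
    rw [hE2def]; linarith
  have hy : (Q:ℝ)*(Real.exp (-t)-1) ≤ ((n:ℝ)*n) * x1 := by
    have h3 := mul_le_mul_of_nonpos_right hQa hexpneg1
    have h4 : (Q:ℝ)/((n:ℝ)*n)*(Real.exp (-t)-1) ≤ x1 := by rw [hx1def]; exact h3
    have h5 := mul_le_mul_of_nonneg_left h4 hnn.le
    calc (Q:ℝ)*(Real.exp (-t)-1) = ((n:ℝ)*n) * ((Q:ℝ)/((n:ℝ)*n)*(Real.exp (-t)-1)) := by
          field_simp
      _ ≤ ((n:ℝ)*n) * x1 := h5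
  have hb1 : E1 ≤ ((n:ℝ)*n) * Real.exp x1 := by
    have hexp := Real.add_one_le_exp x1
    have h6 := mul_le_mul_of_nonneg_left hexp hnn.le
    rw [hE1def]; nlinarith [hy]
  have hc2a : (c:ℝ)^2 = ((n:ℝ)*n) * a^2 := by rw [hac]; field_simp
  have hb2 : E2 ≤ ((n:ℝ)*n) * Real.exp x2 := by
    have hexp := Real.add_one_le_exp x2
    have h5 := mul_le_mul_of_nonneg_left hexp hnn.le
    rw [hE2def, hc2a]
    nlinarith [h5]
  have hpow : E1^c * E2^m ≤ (((n:ℝ)*n) * Real.exp x1)^c * (((n:ℝ)*n) * Real.exp x2)^m := by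
    have h1 := pow_le_pow_left₀ hE1nonneg hb1 c
    have h2 := pow_le_pow_left₀ hE2nonneg hb2 m
    exact mul_le_mul h1 h2 (pow_nonneg hE2nonneg m) (by positivity)
  have hpow2 : (((n:ℝ)*n) * Real.exp x1)^c * (((n:ℝ)*n) * Real.exp x2)^m
      = ((n:ℝ)*n)^(c+m) * Real.exp ((c:ℝ)*x1 + (m:ℝ)*x2) := by
    rw [pow_add, Real.exp_add, Real.exp_nat_mul x1 c, Real.exp_nat_mul x2 m]
    ring
  have hmR : (m:ℝ) = (n:ℝ) - c := by
    have h7 : (c:ℝ) + m = n := by exact_mod_cast hcm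
    linarith
  have hcR : (c:ℝ) = (n:ℝ) * a := by rw [hac]; field_simp
  have hcosh0 : 0 ≤ Real.exp t + Real.exp (-t) - 2 := by
    nlinarith [Real.add_one_le_exp t, Real.add_one_le_exp (-t)]
  have h13 : 0 < 1 - t/3 := by linarith
  have hcosh : Real.exp t + Real.exp (-t) - 2 ≤ t^2/(1-t/3) := by
    rw [le_div_iff₀ h13]
    nlinarith [coshBound t ht0]
  have hexpo : (c:ℝ)*x1 + (m:ℝ)*x2
      ≤ l^2 * (2 * a^2 / (n:ℝ)) / 2 / (1 - l * (1/(n:ℝ)) / 3) := by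
    have heq : (c:ℝ)*x1 + (m:ℝ)*x2
        = (n:ℝ)*a^2*(1-a)*(Real.exp t + Real.exp (-t) - 2) := by
      rw [hx1def, hx2def, hmR, hcR]; ring
    have hstep : (n:ℝ)*a^2*(1-a)*(Real.exp t + Real.exp (-t) - 2)
        ≤ (n:ℝ)*a^2*(t^2/(1-t/3)) := by
      have h1 : (1-a)*(Real.exp t + Real.exp (-t) - 2) ≤ t^2/(1-t/3) := by
        nlinarith [hcosh, hcosh0, mul_nonneg ha0 hcosh0]
      have h2 : (0:ℝ) ≤ (n:ℝ)*a^2 := by positivity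
      calc (n:ℝ)*a^2*(1-a)*(Real.exp t + Real.exp (-t) - 2)
          = ((n:ℝ)*a^2)*((1-a)*(Real.exp t + Real.exp (-t) - 2)) := by ring
        _ ≤ ((n:ℝ)*a^2)*(t^2/(1-t/3)) := mul_le_mul_of_nonneg_left h1 h2
        _ = (n:ℝ)*a^2*(t^2/(1-t/3)) := by ring
    have hrhs : (n:ℝ)*a^2*(t^2/(1-t/3))
        = l^2 * (2 * a^2 / (n:ℝ)) / 2 / (1 - l * (1/(n:ℝ)) / 3) := by
      have h3 : 1 - l * (1/(n:ℝ))/3 = 1 - t/3 := by rw [htdef]; ring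
      have hnum : (n:ℝ)*a^2*t^2 = l^2 * (2 * a^2 / (n:ℝ))/2 := by
        rw [htdef]
        field_simp [hnR.ne']
      calc (n:ℝ)*a^2*(t^2/(1-t/3)) = ((n:ℝ)*a^2*t^2)/(1-t/3) := by ring
        _ = (l^2 * (2 * a^2 / (n:ℝ))/2)/(1-t/3) := by rw [hnum]
        _ = l^2 * (2 * a^2 / (n:ℝ))/2/(1 - l * (1/(n:ℝ))/3) := by rw [h3]
    rw [heq, ← hrhs]
    exact hstep
  have hN : (Fintype.card (Ch2Seed n) : ℝ) = ((n:ℝ)*n)^(c+m) := by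
    rw [hcm]
    have h8 : Fintype.card (Ch2Seed n) = (n*n)^n := by simp
    rw [h8]; push_cast; ring
  calc (∑ w : Ch2Seed n, Real.exp (l * (alphaFrac (ch2Update σ w) i - a)))
      = E1 ^ c * E2 ^ m := by rw [hadef, hfact, hprod]
    _ ≤ ((n:ℝ)*n)^(c+m) * Real.exp ((c:ℝ)*x1 + (m:ℝ)*x2) := by rw [← hpow2]; exact hpow
    _ ≤ ((n:ℝ)*n)^(c+m) *
        Real.exp (l^2 * (2 * a^2 / (n:ℝ)) / 2 / (1 - l * (1/(n:ℝ)) / 3)) := by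
        exact mul_le_mul_of_nonneg_left (Real.exp_le_exp.mpr hexpo) (by positivity)
    _ = (Fintype.card (Ch2Seed n) : ℝ) *
        Real.exp (l^2 * (2 * a^2 / (n:ℝ)) / 2 / (1 - l * (1/(n:ℝ)) / 3)) := by rw [hN]


set_option maxHeartbeats 1000000 in
/-- **Bernstein condition for `α_t` in a special case of 2-Choices.**
For the 2-Choices dynamics, if `α_{t-1}(i) ≤ γ_{t-1}` then, conditioned on the
configuration `σ` at round `t-1` (whose one-step law is `ch2Step σ`), the difference
`α_t(i) - α_{t-1}(i)` satisfies the one-sided `(1/n, 2 α_{t-1}(i)²/n)`-Bernstein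
condition. -/
theorem bernstein_condition_two_choices_special :
    ∀ n k : ℕ, 2 ≤ k → k ≤ n → ∀ σ : Config n k, ∀ i : Fin k,
      alphaFrac σ i ≤ gammaNorm σ →
      OneSidedBernsteinCond (ch2Step σ) (fun τ => alphaFrac τ i - alphaFrac σ i)
        (1 / n) (2 * alphaFrac σ i ^ 2 / n) := by
  intro n k hk2 hkn σ i hag l hl0 hl3
  have hn : 0 < n := lt_of_lt_of_le (by omega) hkn
  have hmeas1 : Measurable (ch2Update σ) := measurable_of_countable _
  have hmeas2 : Measurable (fun τ : Config n k =>
      ENNReal.ofReal (Real.exp (l * (alphaFrac τ i - alphaFrac σ i)))) :=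
    measurable_of_countable _
  rw [ch2Step, MeasureTheory.lintegral_map hmeas2 hmeas1]
  have huni : _root_.uniformOn (Ch2Seed n)
      = (Fintype.card (Ch2Seed n) : ℝ≥0∞)⁻¹ • MeasureTheory.Measure.count := rfl
  rw [huni, MeasureTheory.lintegral_smul_measure, MeasureTheory.lintegral_count, tsum_fintype]
  have hsum := mainRealIneq n k hn σ i hag l hl0 hl3 expNegLe coshBound
  have hne : Nonempty (Ch2Seed n) := ⟨fun _ => (⟨0, hn⟩, ⟨0, hn⟩)⟩
  have hN0 : 0 < Fintype.card (Ch2Seed n) := Fintype.card_pos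
  have hNR : (0:ℝ) < (Fintype.card (Ch2Seed n) : ℝ) := by exact_mod_cast hN0
  have h1 : (∑ w : Ch2Seed n,
      ENNReal.ofReal (Real.exp (l * (alphaFrac (ch2Update σ w) i - alphaFrac σ i))))
      = ENNReal.ofReal (∑ w : Ch2Seed n,
          Real.exp (l * (alphaFrac (ch2Update σ w) i - alphaFrac σ i))) :=
    (ENNReal.ofReal_sum_of_nonneg (fun w _ => (Real.exp_pos _).le)).symm
  rw [h1]
  have h2 : ((Fintype.card (Ch2Seed n) : ℝ≥0∞))⁻¹
      = ENNReal.ofReal ((Fintype.card (Ch2Seed n) : ℝ)⁻¹) := by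
    rw [ENNReal.ofReal_inv_of_pos hNR, ENNReal.ofReal_natCast]
  rw [h2, smul_eq_mul, ← ENNReal.ofReal_mul (by positivity)]
  apply ENNReal.ofReal_le_ofReal
  calc (Fintype.card (Ch2Seed n) : ℝ)⁻¹ * (∑ w : Ch2Seed n,
        Real.exp (l * (alphaFrac (ch2Update σ w) i - alphaFrac σ i)))
      ≤ (Fintype.card (Ch2Seed n) : ℝ)⁻¹ * ((Fintype.card (Ch2Seed n) : ℝ) *
        Real.exp (l^2 * (2 * alphaFrac σ i^2 / (n:ℝ)) / 2 / (1 - l * (1/(n:ℝ)) / 3))) :=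
      mul_le_mul_of_nonneg_left hsum (by positivity)
    _ = Real.exp (l^2 * (2 * alphaFrac σ i^2 / (n:ℝ)) / 2 / (1 - l * (1/(n:ℝ)) / 3)) := by
      field_simp
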